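/- arXiv:2112.05896 — 5 statements merged into one kernel-verified Lean document; each statement's English description precedes it below -/
import Mathlib

section
/- Let F : ℤ × ℤ → ℝ be a symmetric function satisfying the three functional equations F(1+b+c,a) + F(1+c+a,b) = F(a,b) + F(b,c) + F(c,a), F(1+a+b,c) + F(1+b+c,a) = F(a,b) + F(b,c) + F(c,a), and F(1+c+a,b) + F(1+a+b,c) = F(a,b) + F(b,c) + F(c,a) for all a, b, c. Then there is a constant κ such that F(a,b) = κ(a+b+2)/2 · 2, i.e., F(a,b) = κ(a+b+2) for all a,b (with κ = F(0,0)/2). -/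
/-!
Subtracting the second equation from the first gives `F (1 + c + a, b) = F (1 + a + b, c)`,
so `F (x, y)` depends only on `x + y`: `F (x, y) = G (x + y)` with `G s = F (s, 0)`.
The first equation at `(s, 0, 0)` then reads `2 G (s + 1) = 2 G s + G 0`, so `G` is affine
with slope `G 0 / 2`.
-/

theorem Int.apply_eq_apply_zero_add_zsmul {M : Type*} [AddCommGroup M] {G : ℤ → M} {d : M}
    (h : ∀ n, G (n + 1) = G n + d) (n : ℤ) : G n = G 0 + n • d := by
  induction n using Int.induction_on with
  | zero => simp
  | succ k ih => rw [h, ih, add_zsmul, one_zsmul, add_assoc]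
  | pred k ih =>
    rw [eq_sub_of_add_eq (h (-(k : ℤ) - 1)).symm, sub_add_cancel, ih, sub_zsmul, one_zsmul]
    abel

lemma apply_eq_apply_add_zero_of_shift {α : Type*} {F : ℤ × ℤ → α}
    (hshift : ∀ a b c : ℤ, F (1 + c + a, b) = F (1 + a + b, c)) (x y : ℤ) :
    F (x, y) = F (x + y, 0) := by
  simpa [add_sub_cancel, add_comm x y, add_left_comm] using hshift (x - 1) y 0

theorem stmt_0_general (F : ℤ × ℤ → ℝ)
    (h1 : ∀ a b c : ℤ,
      F (1 + b + c, a) + F (1 + c + a, b) = F (a, b) + F (b, c) + F (c, a))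
    (h2 : ∀ a b c : ℤ,
      F (1 + a + b, c) + F (1 + b + c, a) = F (a, b) + F (b, c) + F (c, a)) :
    ∃ κ : ℝ, κ = F (0, 0) / 2 ∧ ∀ a b : ℤ, F (a, b) = κ * ((a : ℝ) + b + 2) := by
  have hsum : ∀ x y : ℤ, F (x, y) = F (x + y, 0) :=
    apply_eq_apply_add_zero_of_shift fun a b c => by linarith [h1 a b c, h2 a b c]
  have hstep : ∀ s : ℤ, F (s + 1, 0) = F (s, 0) + F (0, 0) / 2 := by
    intro s
    have h := h1 s 0 0
    simp only [add_zero, add_comm (1 : ℤ) s] at h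
    rw [hsum 1 s, hsum 0 s, zero_add, add_comm (1 : ℤ) s] at h
    linarith
  refine ⟨F (0, 0) / 2, rfl, fun a b => ?_⟩
  rw [hsum, Int.apply_eq_apply_zero_add_zsmul (G := fun s => F (s, 0)) hstep, zsmul_eq_mul]
  push_cast
  ring

/-- If a symmetric function `F : ℤ × ℤ → ℝ` satisfies the three functional
equations arising from the super Jacobi identity for the deformed bracket with
a closed 1-form, then `F (a, b) = κ * (a + b + 2)` with `κ = F (0,0) / 2`. -/
theorem stmt_0 (F : ℤ × ℤ → ℝ)
    (hsymm : ∀ a b : ℤ, F (a, b) = F (b, a))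
    (h1 : ∀ a b c : ℤ,
      F (1 + b + c, a) + F (1 + c + a, b) = F (a, b) + F (b, c) + F (c, a))
    (h2 : ∀ a b c : ℤ,
      F (1 + a + b, c) + F (1 + b + c, a) = F (a, b) + F (b, c) + F (c, a))
    (h3 : ∀ a b c : ℤ,
      F (1 + c + a, b) + F (1 + a + b, c) = F (a, b) + F (b, c) + F (c, a)) :
    ∃ κ : ℝ, κ = F (0, 0) / 2 ∧ ∀ a b : ℤ, F (a, b) = κ * ((a : ℝ) + b + 2) :=
  stmt_0_general F h1 h2
end

section
/- Let F : ℤ × ℤ → ℝ be a symmetric function satisfying F(1+b+c,a) + F(1+c+a,b) = 0, F(1+a+b,c) + F(1+b+c,a) = 0, F(1+c+a,b) + F(1+a+b,c) = 0, and F(a,b) + F(b,c) + F(c,a) = 0 for all a,b,c ∈ ℤ. Then F is identically zero. -/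
theorem apply_eq_zero_of_symm_of_cyclic_sum_eq_zero {α M : Type*} [AddCommGroup M]
    [IsAddTorsionFree M] (F : α × α → M) (hsymm : ∀ a b, F (a, b) = F (b, a))
    (hcyc : ∀ a b c, F (a, b) + F (b, c) + F (c, a) = 0) (a b : α) : F (a, b) = 0 := by
  have hdiag : F (a, a) = 0 := by
    have h := hcyc a a a
    rw [← nsmul_eq_zero_iff_right (three_ne_zero : (3 : ℕ) ≠ 0), ← h]
    abel
  have h := hcyc a b a
  rw [← nsmul_eq_zero_iff_right (two_ne_zero : (2 : ℕ) ≠ 0), ← h, hsymm b a, hdiag]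
  abel

theorem stmt_1_general (F : ℤ × ℤ → ℝ)
    (hsymm : ∀ a b : ℤ, F (a, b) = F (b, a))
    (h4 : ∀ a b c : ℤ, F (a, b) + F (b, c) + F (c, a) = 0) :
    ∀ a b : ℤ, F (a, b) = 0 :=
  apply_eq_zero_of_symm_of_cyclic_sum_eq_zero F hsymm h4

/-- If a symmetric function `F : ℤ × ℤ → ℝ` satisfies the four functional
equations arising from the super Jacobi identity for the deformed bracket with
a non-closed 1-form, then `F` is identically zero. -/
theorem stmt_1 (F : ℤ × ℤ → ℝ)
    (hsymm : ∀ a b : ℤ, F (a, b) = F (b, a))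
    (h1 : ∀ a b c : ℤ, F (1 + b + c, a) + F (1 + c + a, b) = 0)
    (h2 : ∀ a b c : ℤ, F (1 + a + b, c) + F (1 + b + c, a) = 0)
    (h3 : ∀ a b c : ℤ, F (1 + c + a, b) + F (1 + a + b, c) = 0)
    (h4 : ∀ a b c : ℤ, F (a, b) + F (b, c) + F (c, a) = 0) :
    ∀ a b : ℤ, F (a, b) = 0 :=
  stmt_1_general F hsymm h4
end

section
/- For a smooth manifold M and forms α ∈ Ω^a(M), β ∈ Ω^b(M), γ ∈ Ω^c(M), define the bracket [α,β] = (-1)^a d(α∧β). Then it satisfies the graded Jacobi (cyclic) identity Σ_{cyclic (α,β,γ)} (-1)^{a'c'} [[α,β],γ] = 0, where a' = a+1, b' = b+1, c' = c+1 denote the shifted parities. -/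
/-- For the standard bracket `[α,β] = (-1)^a d(α∧β)` on differential forms
(modelled in a graded-commutative differential algebra), the graded cyclic sum
`Σ (-1)^{(a+1)(c+1)} [[α,β],γ]` over cyclic permutations of `(α,β,γ)`
vanishes: this is the super Jacobi identity for the standard bracket. -/
theorem stmt_7 {A : Type*} [Ring A] [Algebra ℝ A]
    (Ω : ℕ → Submodule ℝ A)
    (hmul : ∀ (p q : ℕ) (x y : A), x ∈ Ω p → y ∈ Ω q → x * y ∈ Ω (p + q))
    (hcomm : ∀ (p q : ℕ) (x y : A), x ∈ Ω p → y ∈ Ω q →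
      x * y = ((-1 : ℝ) ^ (p * q)) • (y * x))
    (d : A →ₗ[ℝ] A)
    (hdeg : ∀ (p : ℕ) (x : A), x ∈ Ω p → d x ∈ Ω (p + 1))
    (hd2 : ∀ x : A, d (d x) = 0)
    (hleib : ∀ (p : ℕ) (x y : A), x ∈ Ω p →
      d (x * y) = d x * y + ((-1 : ℝ) ^ p) • (x * d y))
    (a b c : ℕ) (α β γ : A) (hα : α ∈ Ω a) (hβ : β ∈ Ω b) (hγ : γ ∈ Ω c) :
    ((-1 : ℝ) ^ ((a + 1) * (c + 1))) •
        (((-1 : ℝ) ^ (a + b + 1)) • d ((((-1 : ℝ) ^ a) • d (α * β)) * γ)) +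
      ((-1 : ℝ) ^ ((b + 1) * (a + 1))) •
        (((-1 : ℝ) ^ (b + c + 1)) • d ((((-1 : ℝ) ^ b) • d (β * γ)) * α)) +
      ((-1 : ℝ) ^ ((c + 1) * (b + 1))) •
        (((-1 : ℝ) ^ (c + a + 1)) • d ((((-1 : ℝ) ^ c) • d (γ * α)) * β)) = 0 := by
  have hαβ : d (α * β) ∈ Ω (a + b + 1) := hdeg _ _ (hmul a b α β hα hβ)
  have hβγ : d (β * γ) ∈ Ω (b + c + 1) := hdeg _ _ (hmul b c β γ hβ hγ)
  have hγα : d (γ * α) ∈ Ω (c + a + 1) := hdeg _ _ (hmul c a γ α hγ hα)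
  have e1 : d (d (α * β) * γ) = ((-1:ℝ)^(a+b+1)) • (d (α*β) * d γ) := by
    rw [hleib (a+b+1) _ γ hαβ, hd2, zero_mul, zero_add]
  have e2 : d (d (β * γ) * α) = ((-1:ℝ)^(b+c+1)) • (d (β*γ) * d α) := by
    rw [hleib (b+c+1) _ α hβγ, hd2, zero_mul, zero_add]
  have e3 : d (d (γ * α) * β) = ((-1:ℝ)^(c+a+1)) • (d (γ*α) * d β) := by
    rw [hleib (c+a+1) _ β hγα, hd2, zero_mul, zero_add]
  have f1 : d (α * β) = d α * β + ((-1:ℝ)^a) • (α * d β) := hleib a α β hα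
  have f2 : d (β * γ) = d β * γ + ((-1:ℝ)^b) • (β * d γ) := hleib b β γ hβ
  have f3 : d (γ * α) = d γ * α + ((-1:ℝ)^c) • (γ * d α) := hleib c γ α hγ
  have m1 : (d α * β) * d γ = d α * (β * d γ) := mul_assoc _ _ _
  have m2 : (α * d β) * d γ = α * (d β * d γ) := mul_assoc _ _ _
  have m3 : (d β * γ) * d α = ((-1:ℝ)^((b+1+c)*(a+1))) • (d α * (d β * γ)) :=
    hcomm (b+1+c) (a+1) _ _ (hmul (b+1) c _ _ (hdeg b β hβ) hγ) (hdeg a α hα)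
  have m4 : (β * d γ) * d α = ((-1:ℝ)^((b+(c+1))*(a+1))) • (d α * (β * d γ)) :=
    hcomm (b+(c+1)) (a+1) _ _ (hmul b (c+1) _ _ hβ (hdeg c γ hγ)) (hdeg a α hα)
  have m5 : (d γ * α) * d β = ((-1:ℝ)^((c+1)*(a+(b+1)))) • (α * (d β * d γ)) := by
    rw [mul_assoc, hcomm (c+1) (a+(b+1)) (d γ) (α * d β) (hdeg c γ hγ)
      (hmul a (b+1) _ _ hα (hdeg b β hβ)), mul_assoc]
  have m6 : (γ * d α) * d β
      = ((-1:ℝ)^(c*(a+1)) * (-1:ℝ)^(c*(b+1))) • (d α * (d β * γ)) := by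
    rw [hcomm c (a+1) γ (d α) hγ (hdeg a α hα), smul_mul_assoc, mul_assoc,
      hcomm c (b+1) γ (d β) hγ (hdeg b β hβ), mul_smul_comm, smul_smul]
  simp only [map_smul, smul_mul_assoc]
  rw [e1, e2, e3, f1, f2, f3]
  simp only [add_mul, smul_mul_assoc, m1, m2, m3, m4, m5, m6]
  simp only [smul_add, smul_smul]
  match_scalars <;>
  · obtain ⟨a, rfl | rfl⟩ := Nat.even_or_odd' a <;>
      obtain ⟨b, rfl | rfl⟩ := Nat.even_or_odd' b <;>
      obtain ⟨c, rfl | rfl⟩ := Nat.even_or_odd' c <;>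
      · simp only [pow_add, pow_mul, pow_one, neg_one_sq, one_pow, mul_one, one_mul]
        ring
end

section
/- Let φ be a closed 1-form on a smooth manifold M and t ∈ ℝ. The bracket [α,β]_{t,φ} = (-1)^a d(α∧β) + ((a+b+2)/2) α ∧ (tφ) ∧ β satisfies the super Jacobi identity: the cyclic sum over (α,β,γ) of (-1)^{(a+1)(c+1)} [[α,β]_{t,φ}, γ]_{t,φ} vanishes, for α ∈ Ω^a, β ∈ Ω^b, γ ∈ Ω^c. -/
/-! Since `ψ` has degree one, graded commutativity gives `ψ * ψ = 0` and lets `ψ` be moved to the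
front of any product at the cost of a sign. Together with `d ψ = 0` and `d ∘ d = 0`, each double
bracket `[[x, y], z]` thus collapses to a combination of the five monomials `dx y dz`, `x dy dz`,
`ψ dx y z`, `ψ x dy z`, `ψ x y dz`, the terms quadratic in `ψ` dropping out. Rotating the second and
third terms of the cyclic sum back into the order `α β γ`, every coefficient of the Jacobiator
cancels, which is a check on the parities of `a`, `b`, `c`. -/

section

variable {A : Type*} [Ring A] [Algebra ℝ A]

structure IsGradedCommutative (Ω : ℕ → Submodule ℝ A) : Prop where
  mul_mem {p q : ℕ} {x y : A} : x ∈ Ω p → y ∈ Ω q → x * y ∈ Ω (p + q)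
  comm {p q : ℕ} {x y : A} : x ∈ Ω p → y ∈ Ω q → x * y = ((-1 : ℝ) ^ (p * q)) • (y * x)

structure IsGradedDifferential (Ω : ℕ → Submodule ℝ A) (d : A →ₗ[ℝ] A) : Prop where
  map_mem {p : ℕ} {x : A} : x ∈ Ω p → d x ∈ Ω (p + 1)
  map_map (x : A) : d (d x) = 0
  map_mul {p : ℕ} {x : A} (y : A) : x ∈ Ω p → d (x * y) = d x * y + ((-1 : ℝ) ^ p) • (x * d y)

namespace IsGradedCommutative

variable {Ω : ℕ → Submodule ℝ A} {p q r : ℕ} {x y z ψ : A}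

theorem mul_self_eq_zero_of_mem_one (hΩ : IsGradedCommutative Ω) (hψ : ψ ∈ Ω 1) :
    ψ * ψ = 0 := by
  linear_combination (norm := module) (1 / 2 : ℝ) • hΩ.comm hψ hψ

theorem mul_self_mul_eq_zero_of_mem_one (hΩ : IsGradedCommutative Ω) (hψ : ψ ∈ Ω 1) (w : A) :
    ψ * (ψ * w) = 0 := by
  rw [← mul_assoc, hΩ.mul_self_eq_zero_of_mem_one hψ, zero_mul]

theorem mul_left_comm_of_mem_one (hΩ : IsGradedCommutative Ω) (hψ : ψ ∈ Ω 1) (hx : x ∈ Ω p)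
    (w : A) : x * (ψ * w) = ((-1 : ℝ) ^ p) • (ψ * (x * w)) := by
  rw [← mul_assoc, hΩ.comm hx hψ, mul_one, smul_mul_assoc, mul_assoc]

theorem mul_mul_rotate (hΩ : IsGradedCommutative Ω) (hx : x ∈ Ω p) (hy : y ∈ Ω q)
    (hz : z ∈ Ω r) : y * (z * x) = ((-1 : ℝ) ^ ((q + r) * p)) • (x * (y * z)) := by
  rw [← mul_assoc, hΩ.comm (hΩ.mul_mem hy hz) hx]

theorem mul_mul_rotate' (hΩ : IsGradedCommutative Ω) (hx : x ∈ Ω p) (hy : y ∈ Ω q)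
    (hz : z ∈ Ω r) : z * (x * y) = ((-1 : ℝ) ^ (r * (p + q))) • (x * (y * z)) := by
  rw [hΩ.comm hz (hΩ.mul_mem hx hy), mul_assoc]

end IsGradedCommutative

noncomputable def deformedBracket (d : A →ₗ[ℝ] A) (ψ : A) (p q : ℕ) (x y : A) : A :=
  ((-1 : ℝ) ^ p) • d (x * y) + (((p : ℝ) + (q : ℝ) + 2) / 2) • (x * ψ * y)

variable {Ω : ℕ → Submodule ℝ A} {d : A →ₗ[ℝ] A} {ψ : A} {p q r : ℕ} {x y z : A}

-- `(r + 1) / 2` is the outer weight `(p + q + r + 3) / 2` minus the inner weight `(p + q + 2) / 2`.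
theorem deformedBracket_deformedBracket (hΩ : IsGradedCommutative Ω)
    (hd : IsGradedDifferential Ω d) (hψ : ψ ∈ Ω 1) (hdψ : d ψ = 0)
    (hx : x ∈ Ω p) (hy : y ∈ Ω q) :
    deformedBracket d ψ (p + q + 1) r (deformedBracket d ψ p q x y) z =
      ((-1 : ℝ) ^ p) • (d x * (y * d z)) + x * (d y * d z)
        + ((-1 : ℝ) ^ (q + 1) * (((r : ℝ) + 1) / 2)) • (ψ * (d x * (y * z)))
        + ((-1 : ℝ) ^ (p + q + 1) * (((r : ℝ) + 1) / 2)) • (ψ * (x * (d y * z)))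
        + ((-1 : ℝ) ^ p * (((p : ℝ) + q + 2) / 2)) • (ψ * (x * (y * d z))) := by
  have hxψ : x * ψ ∈ Ω (p + 1) := hΩ.mul_mem hx hψ
  have hxψy : x * ψ * y ∈ Ω (p + q + 1) := by
    simpa only [add_right_comm] using hΩ.mul_mem hxψ hy
  have hdxy : d (x * y) ∈ Ω (p + q + 1) := hd.map_mem (hΩ.mul_mem hx hy)
  simp only [deformedBracket, add_mul, smul_mul_assoc, map_add, map_smul]
  rw [hd.map_mul z hdxy, hd.map_map, zero_mul, zero_add, hd.map_mul z hxψy,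
    hd.map_mul y hxψ, hd.map_mul ψ hx, hdψ, mul_zero, smul_zero, add_zero, hd.map_mul y hx]
  simp only [mul_assoc, add_mul, smul_mul_assoc, mul_smul_comm, smul_smul, smul_add,
    hΩ.mul_left_comm_of_mem_one hψ hx, hΩ.mul_left_comm_of_mem_one hψ (hd.map_mem hx),
    hΩ.mul_left_comm_of_mem_one hψ hy, hΩ.mul_left_comm_of_mem_one hψ (hd.map_mem hy),
    hΩ.mul_self_mul_eq_zero_of_mem_one hψ, smul_zero, add_zero]
  match_scalars <;>
  · by_cases hp : Even p <;> by_cases hq : Even q <;>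
    simp only [neg_one_pow_eq_ite, parity_simps, iff_true, iff_false, not_true_eq_false,
      not_false_eq_true, if_true, if_false, hp, hq] <;> ring

theorem deformedBracket_jacobi (hΩ : IsGradedCommutative Ω)
    (hd : IsGradedDifferential Ω d) (hψ : ψ ∈ Ω 1) (hdψ : d ψ = 0) {a b c : ℕ} {α β γ : A}
    (hα : α ∈ Ω a) (hβ : β ∈ Ω b) (hγ : γ ∈ Ω c) :
    ((-1 : ℝ) ^ ((a + 1) * (c + 1))) •
        deformedBracket d ψ (a + b + 1) c (deformedBracket d ψ a b α β) γ +
      ((-1 : ℝ) ^ ((b + 1) * (a + 1))) •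
        deformedBracket d ψ (b + c + 1) a (deformedBracket d ψ b c β γ) α +
      ((-1 : ℝ) ^ ((c + 1) * (b + 1))) •
        deformedBracket d ψ (c + a + 1) b (deformedBracket d ψ c a γ α) β = 0 := by
  have hdα := hd.map_mem hα
  have hdβ := hd.map_mem hβ
  have hdγ := hd.map_mem hγ
  rw [deformedBracket_deformedBracket hΩ hd hψ hdψ hα hβ,
    deformedBracket_deformedBracket hΩ hd hψ hdψ hβ hγ,
    deformedBracket_deformedBracket hΩ hd hψ hdψ hγ hα,
    hΩ.mul_mul_rotate hdα hdβ hγ, hΩ.mul_mul_rotate hdα hβ hdγ, hΩ.mul_mul_rotate hα hdβ hγ,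
    hΩ.mul_mul_rotate hα hβ hdγ, hΩ.mul_mul_rotate hdα hβ hγ,
    hΩ.mul_mul_rotate' hα hdβ hdγ, hΩ.mul_mul_rotate' hdα hdβ hγ, hΩ.mul_mul_rotate' hα hβ hdγ,
    hΩ.mul_mul_rotate' hdα hβ hγ, hΩ.mul_mul_rotate' hα hdβ hγ]
  simp only [mul_smul_comm]
  match_scalars <;>
  · by_cases ha : Even a <;> by_cases hb : Even b <;> by_cases hc : Even c <;>
    simp only [neg_one_pow_eq_ite, parity_simps, iff_true, iff_false, not_true_eq_false,
      not_false_eq_true, or_true, or_false, if_true, if_false, ha, hb, hc] <;> ring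

end

/-- Super Jacobi identity for the deformed standard bracket
`[α,β]_{t,φ} = (-1)^a d(α∧β) + ((a+b+2)/2) α ∧ tφ ∧ β` on differential forms
with `φ` a closed 1-form: the cyclic sum
`Σ (-1)^{(a+1)(c+1)} [[α,β]_{t,φ}, γ]_{t,φ}` vanishes. -/
theorem stmt_9 {A : Type*} [Ring A] [Algebra ℝ A]
    (Ω : ℕ → Submodule ℝ A)
    (hmul : ∀ (p q : ℕ) (x y : A), x ∈ Ω p → y ∈ Ω q → x * y ∈ Ω (p + q))
    (hcomm : ∀ (p q : ℕ) (x y : A), x ∈ Ω p → y ∈ Ω q →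
      x * y = ((-1 : ℝ) ^ (p * q)) • (y * x))
    (d : A →ₗ[ℝ] A)
    (hdeg : ∀ (p : ℕ) (x : A), x ∈ Ω p → d x ∈ Ω (p + 1))
    (hd2 : ∀ x : A, d (d x) = 0)
    (hleib : ∀ (p : ℕ) (x y : A), x ∈ Ω p →
      d (x * y) = d x * y + ((-1 : ℝ) ^ p) • (x * d y))
    (t : ℝ) (φ : A) (hφ : φ ∈ Ω 1) (hclosed : d φ = 0)
    (a b c : ℕ) (α β γ : A) (hα : α ∈ Ω a) (hβ : β ∈ Ω b) (hγ : γ ∈ Ω c) :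
    (fun Bk : ℕ → ℕ → A → A → A =>
      ((-1 : ℝ) ^ ((a + 1) * (c + 1))) • Bk (a + b + 1) c (Bk a b α β) γ +
        ((-1 : ℝ) ^ ((b + 1) * (a + 1))) • Bk (b + c + 1) a (Bk b c β γ) α +
        ((-1 : ℝ) ^ ((c + 1) * (b + 1))) • Bk (c + a + 1) b (Bk c a γ α) β = 0)
      (fun p q x y =>
        ((-1 : ℝ) ^ p) • d (x * y) +
          (((p : ℝ) + (q : ℝ) + 2) / 2) • (x * (t • φ) * y)) := by
  have hΩ : IsGradedCommutative Ω := ⟨hmul _ _ _ _, hcomm _ _ _ _⟩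
  have hd : IsGradedDifferential Ω d := ⟨hdeg _ _, hd2, fun y hx => hleib _ _ y hx⟩
  have hψ : t • φ ∈ Ω 1 := Submodule.smul_mem _ t hφ
  have hdψ : d (t • φ) = 0 := by rw [map_smul, hclosed, smul_zero]
  exact deformedBracket_jacobi hΩ hd hψ hdψ hα hβ hγ
end

section
/- For a Lie superalgebra g = ⊕ g_i with homology boundary operator ∂ on the super chain spaces, and homogeneous decomposable chains A = A₁⊼…⊼A_p, B = B₁⊼…⊼B_q, define [A,B] := ∂(A⊼B) − (∂A)⊼B − (−1)^p A⊼(∂B). Then [A,B] equals the double sum Σ_{i,j} (−1)^{i + a_i Σ_{s>i} a_s + j + b_j(1 + Σ_{s≤j} b_s)} A₁⊼…Â_i…⊼A_p ⊼ [A_i,B_j] ⊼ B₁⊼…B̂_j…⊼B_q. -/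
open Finset in
/-- The boundary operator of Lie superalgebra homology on a decomposable
chain `Y₁ ⊼ ⋯ ⊼ Y_m`:
`∂(Y₁⊼⋯⊼Y_m) = Σ_{i<j} (-1)^{i-1 + y_i Σ_{i<s<j} y_s}
  Y₁⊼⋯Ŷ_i⋯⊼[Y_i,Y_j]⊼⋯⊼Y_m` (with `[Y_i,Y_j]` inserted at position `j`).
The chain algebra is modelled as an `ℝ`-algebra `A` whose product is `⊼`;
indices are 0-based, `y i` is the degree of `Y i`, and `br i j` represents
the bracket `[Y_i, Y_j]`. -/
noncomputable def bdryFormula {A : Type*} [Ring A] [Algebra ℝ A] (m : ℕ)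
    (Y : Fin m → A) (y : Fin m → ℤ) (br : Fin m → Fin m → A) : A :=
  ∑ i : Fin m, ∑ j : Fin m,
    if i < j then
      ((-1 : ℝ) ^ ((i : ℤ) + y i * ∑ s ∈ Finset.Ioo i j, y s)) •
        ((((List.ofFn Y).set j (br i j)).eraseIdx i).prod)
    else 0

/-!
Expanding `∂(A⊼B)` over the pairs of positions `i < j` of `A⊼B`, the pairs inside `A` give
`(∂A)⊼B`, the pairs inside `B` give `(-1)^p A⊼(∂B)` (the positions in `B` are shifted by `p`),
and what remains are the mixed pairs. In a mixed term the bracket `[A_i,B_j]` stands at the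
place of `B_j`; moving it to the front of `B` past `B_1, …, B_{j-1}` with the supercommutation
rule costs the sign `(-1)^((a_i+b_j) Σ_{s<j} b_s + j - 1)`, and the resulting exponent agrees
with the stated one modulo `2`.
-/

open Finset

namespace Fin

theorem castAdd_lt_castAdd_iff {m : ℕ} (n : ℕ) {a b : Fin m} : castAdd n a < castAdd n b ↔ a < b :=
  .rfl

theorem castAdd_lt_natAdd {m n : ℕ} (a : Fin m) (b : Fin n) : castAdd n a < natAdd m b := by
  simp only [lt_def, val_castAdd, val_natAdd]
  omega

theorem sum_Ioo_natAdd {M : Type*} [AddCommMonoid M] {n : ℕ} (m : ℕ) (f : Fin (m + n) → M)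
    (a b : Fin n) :
    ∑ i ∈ Ioo (natAdd m a) (natAdd m b), f i = ∑ i ∈ Ioo a b, f (natAdd m i) := by
  rw [← map_natAddEmb_Ioo, sum_map]
  rfl

theorem sum_Ioo_castAdd_natAdd {M : Type*} [AddCommMonoid M] {m n : ℕ} (f : Fin (m + n) → M)
    (a : Fin m) (b : Fin n) :
    ∑ i ∈ Ioo (castAdd n a) (natAdd m b), f i =
      ∑ i ∈ Ioi a, f (castAdd n i) + ∑ i ∈ Iio b, f (natAdd m i) := by
  rw [← sum_ite_mem_eq, sum_univ_add, ← sum_ite_mem_eq (Ioi a), ← sum_ite_mem_eq (Iio b)]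
  congr 1 <;> refine sum_congr rfl fun i _ => if_congr ?_ rfl rfl <;>
    simp only [mem_Ioo, mem_Ioi, mem_Iio, lt_def, val_castAdd, val_natAdd] <;> omega

theorem prod_Iio_succ_eq_mul {M : Type*} [CommMonoid M] {n : ℕ} (f : Fin (n + 1) → M) (j : Fin n) :
    ∏ i ∈ Iio j.succ, f i = f 0 * ∏ i ∈ Iio j, f i.succ := by
  have : Iio j.succ = Finset.cons 0 ((Iio j).map (succEmb n)) (by simp) := by
    ext k; cases k using Fin.cases <;> simp
  rw [this, Finset.prod_cons, prod_map]
  rfl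

end Fin

theorem prod_neg_neg_one_zpow {K ι : Type*} [Field K] (s : Finset ι) (f : ι → ℤ) :
    ∏ i ∈ s, -(-1 : K) ^ f i = (-1) ^ (∑ i ∈ s, f i + #s) := by
  induction s using Finset.cons_induction with
  | empty => simp
  | cons a s ha ih =>
    rw [prod_cons, sum_cons, card_cons, ih, Nat.cast_succ,
      show f a + ∑ i ∈ s, f i + (#s + 1 : ℤ) = f a + 1 + (∑ i ∈ s, f i + #s) by ring,
      zpow_add₀ (by norm_num) (f a + 1), zpow_add_one₀ (by norm_num)]
    ring

theorem neg_one_zpow_eq_of_even_sub {K : Type*} [DivisionRing K] {a b : ℤ} (h : Even (a - b)) :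
    (-1 : K) ^ a = (-1) ^ b := by
  rw [← Int.cast_negOnePow, ← Int.cast_negOnePow, (Int.negOnePow_eq_iff a b).2 h]

theorem neg_neg_one_zpow_smul_symm {K A : Type*} [Field K] [Ring A] [Algebra K A] {x y : A}
    {n : ℤ} (h : x = (-(-1 : K) ^ n) • y) : y = (-(-1 : K) ^ n) • x := by
  rw [h, smul_smul, neg_mul_neg, ← zpow_add₀ (by norm_num), Even.neg_one_zpow ⟨n, rfl⟩, one_smul]

namespace List
variable {M : Type*} [Monoid M] (l₁ l₂ : List M) (c : M) {k l : ℕ}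

theorem prod_eraseIdx_set_append_left (hk : k < l₁.length) (hl : l < l₁.length) :
    (((l₁ ++ l₂).set k c).eraseIdx l).prod = ((l₁.set k c).eraseIdx l).prod * l₂.prod := by
  rw [set_append, if_pos hk, eraseIdx_append_of_lt_length (by simpa using hl), prod_append]

theorem prod_eraseIdx_set_append_right {n : ℕ} (hn : l₁.length = n) :
    (((l₁ ++ l₂).set (n + k) c).eraseIdx (n + l)).prod =
      l₁.prod * ((l₂.set k c).eraseIdx l).prod := by
  rw [set_append, if_neg (by omega), eraseIdx_append_of_length_le (by omega), prod_append]
  simp [hn]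

theorem prod_eraseIdx_set_append_left_right {n : ℕ} (hn : l₁.length = n) (hl : l < n) :
    (((l₁ ++ l₂).set (n + k) c).eraseIdx l).prod =
      (l₁.eraseIdx l).prod * (l₂.set k c).prod := by
  rw [set_append, if_neg (by omega), eraseIdx_append_of_lt_length (by omega), prod_append]
  simp [hn]

variable {R A : Type*} [CommSemiring R] [Semiring A] [Algebra R A]

theorem prod_set_ofFn {n : ℕ} (Z : Fin n → A) (j : Fin n) (c : A) (σ : Fin n → R)
    (h : ∀ k < j, Z k * c = σ k • (c * Z k)) :
    ((ofFn Z).set j c).prod = (∏ k ∈ Iio j, σ k) • (c * ((ofFn Z).eraseIdx j).prod) := by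
  induction n with
  | zero => exact j.elim0
  | succ n ih =>
    cases j using Fin.cases with
    | zero => simp [show Iio (0 : Fin (n + 1)) = ∅ by ext; simp]
    | succ j =>
      have := ih (fun i => Z i.succ) j (fun i => σ i.succ)
        (fun k hk => h k.succ (Fin.succ_lt_succ_iff.2 hk))
      simp only [ofFn_succ, Fin.val_succ, set_cons_succ, eraseIdx_cons_succ, prod_cons,
        Fin.prod_Iio_succ_eq_mul]
      rw [this, mul_smul_comm, ← mul_assoc, h 0 (Fin.succ_pos j), smul_mul_assoc, smul_smul,
        mul_assoc, mul_comm (σ 0)]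

theorem prod_set_ofFn_of_supercommute {K : Type*} [Field K] [Algebra K A] {n : ℕ}
    (Z : Fin n → A) (z : Fin n → ℤ) (c : A) (e : ℤ)
    (h : ∀ k, Z k * c = (-(-1 : K) ^ (e * z k)) • (c * Z k)) (j : Fin n) :
    ((ofFn Z).set j c).prod =
      (-1 : K) ^ (e * ∑ k ∈ Iio j, z k + j) • (c * ((ofFn Z).eraseIdx j).prod) := by
  rw [prod_set_ofFn Z j c _ fun k _ => h k, prod_neg_neg_one_zpow, ← mul_sum, Fin.card_Iio]

end List

theorem bdryFormula_add {A : Type*} [Ring A] [Algebra ℝ A] {p q : ℕ} (Y : Fin (p + q) → A)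
    (y : Fin (p + q) → ℤ) (br : Fin (p + q) → Fin (p + q) → A) :
    bdryFormula (p + q) Y y br =
      bdryFormula p (Y ∘ Fin.castAdd q) (y ∘ Fin.castAdd q)
          (fun i j => br (Fin.castAdd q i) (Fin.castAdd q j)) *
          (List.ofFn (Y ∘ Fin.natAdd p)).prod +
        ∑ i : Fin p, ∑ j : Fin q,
          (-1 : ℝ) ^ ((i : ℤ) + y (Fin.castAdd q i) *
              (∑ s ∈ Ioi i, y (Fin.castAdd q s) + ∑ s ∈ Iio j, y (Fin.natAdd p s))) •
            (((List.ofFn (Y ∘ Fin.castAdd q)).eraseIdx i).prod *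
              ((List.ofFn (Y ∘ Fin.natAdd p)).set j
                (br (Fin.castAdd q i) (Fin.natAdd p j))).prod) +
        (-1 : ℝ) ^ p • ((List.ofFn (Y ∘ Fin.castAdd q)).prod *
          bdryFormula q (Y ∘ Fin.natAdd p) (y ∘ Fin.natAdd p)
            (fun i j => br (Fin.natAdd p i) (Fin.natAdd p j))) := by
  have hY : List.ofFn Y = List.ofFn (Y ∘ Fin.castAdd q) ++ List.ofFn (Y ∘ Fin.natAdd p) :=
    List.ofFn_add
  have hp : (List.ofFn (Y ∘ Fin.castAdd q)).length = p := List.length_ofFn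
  simp only [bdryFormula, Fin.sum_univ_add, Fin.castAdd_lt_castAdd_iff, Fin.natAdd_lt_natAdd_iff,
    if_pos (Fin.castAdd_lt_natAdd _ _), if_neg (lt_asymm (Fin.castAdd_lt_natAdd _ _)), sum_const_zero, add_zero, sum_add_distrib]
  rw [sum_mul, mul_sum, smul_sum, ← add_assoc]
  congr 1
  congr 1
  · refine sum_congr rfl fun i _ => ?_
    rw [sum_mul]
    refine sum_congr rfl fun j _ => ?_
    split_ifs
    · rw [smul_mul_assoc, Fin.sum_Ioo_castAdd, hY, Fin.val_castAdd, Fin.val_castAdd,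
        List.prod_eraseIdx_set_append_left _ _ _ (by simp) (by simp)]
      rfl
    · rw [zero_mul]
  · refine sum_congr rfl fun i _ => sum_congr rfl fun j _ => ?_
    rw [Fin.sum_Ioo_castAdd_natAdd, hY, Fin.val_castAdd, Fin.val_natAdd,
      List.prod_eraseIdx_set_append_left_right _ _ _ hp i.isLt]
  · refine sum_congr rfl fun i _ => ?_
    rw [mul_sum, smul_sum]
    refine sum_congr rfl fun j _ => ?_
    split_ifs
    · rw [mul_smul_comm, smul_smul, ← zpow_natCast, ← zpow_add₀ (by norm_num),
        Fin.sum_Ioo_natAdd, hY, Fin.val_natAdd, Fin.val_natAdd,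
        List.prod_eraseIdx_set_append_right _ _ _ hp]
      push_cast
      rw [add_assoc]
      rfl
    · rw [mul_zero, smul_zero]

/-- For homogeneous decomposable chains `A = A₁⊼⋯⊼A_p` and `B = B₁⊼⋯⊼B_q`
(modelled as the products of the first `p` and the last `q` of the factors
`Y : Fin (p+q) → A`), the bracket
`[A,B] := ∂(A⊼B) - (∂A)⊼B - (-1)^p A⊼(∂B)` equals
`Σ_{i,j} (-1)^{i + a_i Σ_{s>i} a_s + j + b_j(1 + Σ_{s≤j} b_s)}
  A₁⊼⋯Â_i⋯⊼A_p ⊼ [A_i,B_j] ⊼ B₁⊼⋯B̂_j⋯⊼B_q`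
(indices `i`, `j` 1-based in the sign, as in the paper). -/
theorem stmt_16 {A : Type*} [Ring A] [Algebra ℝ A] (p q : ℕ)
    (Y : Fin (p + q) → A) (y : Fin (p + q) → ℤ)
    (br : Fin (p + q) → Fin (p + q) → A)
    (D : A →ₗ[ℝ] A)
    (hD : D ((List.ofFn Y).prod) = bdryFormula (p + q) Y y br)
    (hDA : D ((List.ofFn (Y ∘ Fin.castAdd q)).prod) =
      bdryFormula p (Y ∘ Fin.castAdd q) (y ∘ Fin.castAdd q)
        (fun i j => br (Fin.castAdd q i) (Fin.castAdd q j)))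
    (hDB : D ((List.ofFn (Y ∘ Fin.natAdd p)).prod) =
      bdryFormula q (Y ∘ Fin.natAdd p) (y ∘ Fin.natAdd p)
        (fun i j => br (Fin.natAdd p i) (Fin.natAdd p j)))
    (hcomm : ∀ i j s : Fin (p + q),
      br i j * Y s = (-(-1 : ℝ) ^ ((y i + y j) * y s)) • (Y s * br i j)) :
    D ((List.ofFn (Y ∘ Fin.castAdd q)).prod * (List.ofFn (Y ∘ Fin.natAdd p)).prod) -
        D ((List.ofFn (Y ∘ Fin.castAdd q)).prod) * (List.ofFn (Y ∘ Fin.natAdd p)).prod -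
        ((-1 : ℝ) ^ p) •
          ((List.ofFn (Y ∘ Fin.castAdd q)).prod * D ((List.ofFn (Y ∘ Fin.natAdd p)).prod)) =
      ∑ i : Fin p, ∑ j : Fin q,
        ((-1 : ℝ) ^
            (((i : ℤ) + 1) +
              y (Fin.castAdd q i) * (∑ s ∈ Finset.Ioi i, y (Fin.castAdd q s)) +
              ((j : ℤ) + 1) +
              y (Fin.natAdd p j) * (1 + ∑ s ∈ Finset.Iic j, y (Fin.natAdd p s)))) •
          (((List.ofFn (Y ∘ Fin.castAdd q)).eraseIdx i).prod *
            br (Fin.castAdd q i) (Fin.natAdd p j) *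
            ((List.ofFn (Y ∘ Fin.natAdd p)).eraseIdx j).prod) := by
  have hprod : (List.ofFn Y).prod =
      (List.ofFn (Y ∘ Fin.castAdd q)).prod * (List.ofFn (Y ∘ Fin.natAdd p)).prod := by
    rw [List.ofFn_add, List.prod_append]
    rfl
  rw [← hprod, hD, hDA, hDB, bdryFormula_add, add_assoc, add_sub_cancel_left, add_sub_cancel_right]
  refine sum_congr rfl fun i _ => sum_congr rfl fun j _ => ?_
  have hswap : ∀ s : Fin q, (Y ∘ Fin.natAdd p) s * br (Fin.castAdd q i) (Fin.natAdd p j) =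
      (-(-1 : ℝ) ^ ((y (Fin.castAdd q i) + y (Fin.natAdd p j)) * (y ∘ Fin.natAdd p) s)) •
        (br (Fin.castAdd q i) (Fin.natAdd p j) * (Y ∘ Fin.natAdd p) s) :=
    fun s => neg_neg_one_zpow_smul_symm (hcomm _ _ _)
  rw [List.prod_set_ofFn_of_supercommute _ _ _ _ hswap, mul_smul_comm, smul_smul,
    ← zpow_add₀ (by norm_num), ← mul_assoc, ← Iio_insert, sum_insert (by simp)]
  refine congrArg (· • _) (neg_one_zpow_eq_of_even_sub ?_)
  obtain ⟨k, hk⟩ := Int.even_mul_succ_self (y (Fin.natAdd p j))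
  exact ⟨y (Fin.castAdd q i) * ∑ s ∈ Iio j, y (Fin.natAdd p s) - 1 - k, by
    simp only [Function.comp_apply]; linear_combination -hk⟩
end
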